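/- Let μ > 0 and κ > 1, and define f^{sc} on the real Hilbert space ℓ² of square-summable sequences (x_i)_{i≥1} by f^{sc}(x) = (μ(κ-1)/8)·( (x₁ - 1)² + Σ_{i=1}^{∞}(x_i - x_{i+1})² ) + (μ/2)·‖x‖₂². Let q = (√κ - 1)/(√κ + 1) and let x* ∈ ℓ² be the sequence with x*_i = q^i. Then x* is the global minimizer of f^{sc}; moreover, for every T ≥ 1 and every x ∈ ℓ² with x_i = 0 for all i ≥ T, we have f^{sc}(x) - f^{sc}(x*) ≥ (μ/2)·q^{2T}·‖x*‖₂². -/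

import Mathlib

/-!
Since `f^{sc}` is quadratic, `f^{sc}(x* + y) - f^{sc}(x*)` is a linear term in `y` plus
`(μ(κ-1)/8)(y₁² + Σ (y_i - y_{i+1})²) + (μ/2)‖y‖²`. Summing by parts against the geometric
sequence `x*` turns the linear term into a multiple of `μq - (μ(κ-1)/4)(1-q)²`, which vanishes
for `q = (√κ-1)/(√κ+1)`. Hence `f^{sc}(x) - f^{sc}(x*) ≥ (μ/2)‖x - x*‖²`, and if `x` vanishes
from index `T` on, then `‖x - x*‖²` is at least the tail `Σ_{i ≥ T} q^{2i} = q^{2(T-1)}‖x*‖²` of `x*`.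
-/

/-- Nesterov's hard instance for smooth strongly convex minimization, on the Hilbert
space `ℓ²` of square-summable real sequences. In Lean's 0-indexing, `x i` is the math
variable `x_{i+1}` (`i ≥ 1` in the paper):
`f^{sc}(x) = (μ(κ-1)/8)·((x₁ - 1)² + Σ_{i≥1} (x_i - x_{i+1})²) + (μ/2)·‖x‖₂²`. -/
noncomputable def fsc (μ κ : ℝ) (x : lp (fun _ : ℕ => ℝ) 2) : ℝ :=
  (μ * (κ - 1) / 8) * ((x 0 - 1) ^ 2 + ∑' i : ℕ, (x i - x (i + 1)) ^ 2)
    + (μ / 2) * ‖x‖ ^ 2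

open scoped lp

namespace lp

theorem real_inner_eq_tsum {ι : Type*} (x y : ℓ²(ι, ℝ)) :
    inner ℝ x y = ∑' i, x i * y i := by
  simp only [inner_eq_tsum, RCLike.inner_apply, conj_trivial, mul_comm]

theorem norm_sq_eq_tsum_sq {ι : Type*} (x : ℓ²(ι, ℝ)) : ‖x‖ ^ 2 = ∑' i, x i ^ 2 := by
  rw [← real_inner_self_eq_norm_sq, real_inner_eq_tsum]
  simp only [sq]

theorem summable_apply_mul_apply {ι : Type*} (x y : ℓ²(ι, ℝ)) :
    Summable fun i => x i * y i := by
  simpa only [RCLike.inner_apply, conj_trivial, mul_comm] using summable_inner (𝕜 := ℝ) x y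

theorem summable_sq {ι : Type*} (x : ℓ²(ι, ℝ)) : Summable fun i => x i ^ 2 := by
  simpa only [sq] using summable_apply_mul_apply x x

theorem tsum_sq_nat_add_le_norm_sq (x : ℓ²(ℕ, ℝ)) (n : ℕ) :
    ∑' i, x (i + n) ^ 2 ≤ ‖x‖ ^ 2 := by
  rw [norm_sq_eq_tsum_sq, ← (summable_sq x).sum_add_tsum_nat_add n]
  exact le_add_of_nonneg_left (Finset.sum_nonneg fun i _ => sq_nonneg _)

theorem tsum_sq_nat_add_le_norm_sub_sq {x : ℓ²(ℕ, ℝ)} {n : ℕ} (hx : ∀ i, n ≤ i → x i = 0)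
    (y : ℓ²(ℕ, ℝ)) : ∑' i, y (i + n) ^ 2 ≤ ‖x - y‖ ^ 2 := by
  calc ∑' i, y (i + n) ^ 2 = ∑' i, (x - y) (i + n) ^ 2 := by
        congr 1; ext i; simp [hx (i + n) (Nat.le_add_left n i)]
    _ ≤ ‖x - y‖ ^ 2 := tsum_sq_nat_add_le_norm_sq _ n

theorem memℓp_sub_succ (x : ℓ²(ℕ, ℝ)) : Memℓp (fun i => x i - x (i + 1)) 2 := by
  have h2 : 0 < (2 : ENNReal).toReal := by norm_num
  have hsucc : Memℓp (fun i => x (i + 1)) 2 :=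
    (memℓp_gen_iff h2).2 <| (summable_nat_add_iff 1).2 <| (memℓp_gen_iff h2).1 (lp.memℓp x)
  exact (lp.memℓp x).sub hsucc

noncomputable def seqDiff (x : ℓ²(ℕ, ℝ)) : ℓ²(ℕ, ℝ) :=
  ⟨fun i => x i - x (i + 1), memℓp_sub_succ x⟩

@[simp]
theorem seqDiff_apply (x : ℓ²(ℕ, ℝ)) (i : ℕ) : seqDiff x i = x i - x (i + 1) := rfl

theorem seqDiff_add (x y : ℓ²(ℕ, ℝ)) : seqDiff (x + y) = seqDiff x + seqDiff y := by
  ext i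
  simp only [seqDiff_apply, coeFn_add, Pi.add_apply]
  ring

theorem seqDiff_geom {q : ℝ} {xstar : ℓ²(ℕ, ℝ)} (hxstar : ∀ i, xstar i = q ^ (i + 1)) :
    seqDiff xstar = (1 - q) • xstar := by
  ext i
  simp only [seqDiff_apply, coeFn_smul, Pi.smul_apply, smul_eq_mul, hxstar]
  ring

theorem mul_inner_geom_seqDiff {q : ℝ} {xstar : ℓ²(ℕ, ℝ)} (hxstar : ∀ i, xstar i = q ^ (i + 1))
    (y : ℓ²(ℕ, ℝ)) :
    q * inner ℝ xstar (seqDiff y) = q * y 0 - (1 - q) * inner ℝ xstar y := by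
  have hA := summable_apply_mul_apply xstar y
  have hshift : ∑' i, xstar i * y (i + 1) = inner ℝ xstar y - inner ℝ xstar (seqDiff y) := by
    rw [real_inner_eq_tsum, real_inner_eq_tsum, ← hA.tsum_sub (summable_apply_mul_apply _ _)]
    congr 1; ext i; simp only [seqDiff_apply]; ring
  have hsplit : inner ℝ xstar y = q * y 0 + q * ∑' i, xstar i * y (i + 1) := by
    rw [real_inner_eq_tsum, hA.tsum_eq_zero_add, ← tsum_mul_left]
    simp only [hxstar, pow_succ]
    ring_nf
  linear_combination hsplit + q * hshift

theorem tsum_sq_geom_nat_add {q : ℝ} {xstar : ℓ²(ℕ, ℝ)} (hxstar : ∀ i, xstar i = q ^ (i + 1))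
    (n : ℕ) : ∑' i, xstar (i + n) ^ 2 = q ^ (2 * n) * ‖xstar‖ ^ 2 := by
  rw [norm_sq_eq_tsum_sq, ← tsum_mul_left]
  congr 1; ext i
  rw [hxstar, hxstar]
  ring

end lp

theorem fsc_eq_seqDiff (μ κ : ℝ) (x : ℓ²(ℕ, ℝ)) :
    fsc μ κ x = μ * (κ - 1) / 8 * ((x 0 - 1) ^ 2 + ‖lp.seqDiff x‖ ^ 2) + μ / 2 * ‖x‖ ^ 2 := by
  simp only [fsc, lp.norm_sq_eq_tsum_sq (lp.seqDiff x), lp.seqDiff_apply]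

theorem fsc_add (μ κ : ℝ) (x y : ℓ²(ℕ, ℝ)) :
    fsc μ κ (x + y) = fsc μ κ x
      + (μ * (κ - 1) / 4 * ((x 0 - 1) * y 0 + inner ℝ (lp.seqDiff x) (lp.seqDiff y))
        + μ * inner ℝ x y)
      + (μ * (κ - 1) / 8 * (y 0 ^ 2 + ‖lp.seqDiff y‖ ^ 2) + μ / 2 * ‖y‖ ^ 2) := by
  simp only [fsc_eq_seqDiff, lp.seqDiff_add, norm_add_sq_real, lp.coeFn_add, Pi.add_apply]
  ring

noncomputable def nesterovRate (κ : ℝ) : ℝ := (Real.sqrt κ - 1) / (Real.sqrt κ + 1)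

theorem nesterovRate_pos {κ : ℝ} (hκ : 1 < κ) : 0 < nesterovRate κ := by
  have hs : 1 < Real.sqrt κ := Real.lt_sqrt_of_sq_lt (by linarith)
  unfold nesterovRate
  apply div_pos <;> linarith

theorem nesterovRate_lt_one (κ : ℝ) : nesterovRate κ < 1 := by
  unfold nesterovRate
  rw [div_lt_one (by positivity)]
  linarith

theorem sub_one_div_four_mul_one_sub_nesterovRate_sq {κ : ℝ} (hκ : 0 ≤ κ) :
    (κ - 1) / 4 * (1 - nesterovRate κ) ^ 2 = nesterovRate κ := by
  have hs : Real.sqrt κ ^ 2 = κ := Real.sq_sqrt hκ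
  have hd : Real.sqrt κ + 1 ≠ 0 := by positivity
  unfold nesterovRate
  field_simp
  linear_combination (-4) * hs

theorem fsc_linear_term_geom_eq_zero {μ κ q : ℝ} (hq : (κ - 1) / 4 * (1 - q) ^ 2 = q) (hq0 : q ≠ 0)
    {xstar : ℓ²(ℕ, ℝ)} (hxstar : ∀ i, xstar i = q ^ (i + 1)) (y : ℓ²(ℕ, ℝ)) :
    μ * (κ - 1) / 4 * ((xstar 0 - 1) * y 0 + inner ℝ (lp.seqDiff xstar) (lp.seqDiff y))
      + μ * inner ℝ xstar y = 0 := by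
  rw [lp.seqDiff_geom hxstar, real_inner_smul_left, hxstar 0]
  refine mul_left_cancel₀ hq0 ?_
  linear_combination (μ * (κ - 1) / 4 * (1 - q)) * lp.mul_inner_geom_seqDiff hxstar y
    - μ * inner ℝ xstar y * hq

theorem fsc_sub_fsc_geom_ge {μ κ q : ℝ} (hμ : 0 ≤ μ) (hκ : 1 ≤ κ)
    (hq : (κ - 1) / 4 * (1 - q) ^ 2 = q) (hq0 : q ≠ 0)
    {xstar : ℓ²(ℕ, ℝ)} (hxstar : ∀ i, xstar i = q ^ (i + 1)) (x : ℓ²(ℕ, ℝ)) :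
    μ / 2 * ‖x - xstar‖ ^ 2 ≤ fsc μ κ x - fsc μ κ xstar := by
  have hquad : 0 ≤ μ * (κ - 1) / 8 * ((x - xstar) 0 ^ 2 + ‖lp.seqDiff (x - xstar)‖ ^ 2) :=
    mul_nonneg (div_nonneg (mul_nonneg hμ (sub_nonneg.2 hκ)) (by norm_num)) (by positivity)
  rw [← add_sub_cancel xstar x, fsc_add, fsc_linear_term_geom_eq_zero hq hq0 hxstar,
    add_sub_cancel_left]
  linarith

/-- with `q = (√κ - 1)/(√κ + 1)`, the sequence `x*_i = q^i` is the global
minimizer of `f^{sc}`, and for every `T ≥ 1` and every `x ∈ ℓ²` with `x_i = 0` for all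
`i ≥ T` (1-indexed), `f^{sc}(x) - f^{sc}(x*) ≥ (μ/2)·q^{2T}·‖x*‖₂²`. -/
theorem stmt_19 (μ κ : ℝ) (hμ : 0 < μ) (hκ : 1 < κ)
    (q : ℝ) (hq : q = (Real.sqrt κ - 1) / (Real.sqrt κ + 1))
    (xstar : lp (fun _ : ℕ => ℝ) 2) (hxstar : ∀ i : ℕ, xstar i = q ^ (i + 1)) :
    (∀ x : lp (fun _ : ℕ => ℝ) 2, fsc μ κ xstar ≤ fsc μ κ x) ∧
    ∀ (T : ℕ), 1 ≤ T → ∀ x : lp (fun _ : ℕ => ℝ) 2,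
      (∀ i : ℕ, T ≤ i + 1 → x i = 0) →
      (μ / 2) * q ^ (2 * T) * ‖xstar‖ ^ 2 ≤ fsc μ κ x - fsc μ κ xstar := by
  replace hq : q = nesterovRate κ := hq
  have hq0 : 0 < q := hq ▸ nesterovRate_pos hκ
  have hq1 : q < 1 := hq ▸ nesterovRate_lt_one κ
  have hlower := fsc_sub_fsc_geom_ge hμ.le hκ.le
    (hq ▸ sub_one_div_four_mul_one_sub_nesterovRate_sq (by linarith)) hq0.ne' hxstar
  refine ⟨fun x => ?_, fun T _ x hx => ?_⟩
  · have hdist : 0 ≤ μ / 2 * ‖x - xstar‖ ^ 2 := by positivity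
    linarith [hlower x]
  · calc μ / 2 * q ^ (2 * T) * ‖xstar‖ ^ 2 ≤ μ / 2 * q ^ (2 * (T - 1)) * ‖xstar‖ ^ 2 := by
          gcongr μ / 2 * ?_ * _
          exact pow_le_pow_of_le_one hq0.le hq1.le (by omega)
      _ = μ / 2 * ∑' i, xstar (i + (T - 1)) ^ 2 := by
          rw [lp.tsum_sq_geom_nat_add hxstar, mul_assoc]
      _ ≤ μ / 2 * ‖x - xstar‖ ^ 2 := by
          gcongr
          exact lp.tsum_sq_nat_add_le_norm_sub_sq (fun i hi => hx i (by omega)) xstar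
      _ ≤ fsc μ κ x - fsc μ κ xstar := hlower x
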